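/- arXiv:2002.09555 — 2 statements merged into one kernel-verified Lean document; each statement's English description precedes it below -/
import Mathlib

section
/- For any smooth f : ℝ → ℝ and smooth θ on T², the following integration-by-parts identity holds: ∫ f'(θ) Δ²θ dx = (1/3)[ ∫ f''(θ)((Δθ)² + 2|D²θ|²) dx − ∫ f⁗(θ) |∇θ|⁴ dx ], where |D²θ|² = Σ_{i,j}(∂²_{ij}θ)². -/
open MeasureTheory Real Filter Topology

noncomputable section

/-- Fundamental domain `[0,2π]²` of the flat 2-torus. -/
def Q2 : Set (ℝ × ℝ) := Set.Icc (0, 0) (2 * Real.pi, 2 * Real.pi)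

/-- Directional derivative of `f` at `x` in direction `v`. -/
def pder (f : ℝ × ℝ → ℝ) (v : ℝ × ℝ) (x : ℝ × ℝ) : ℝ := fderiv ℝ f x v

/-- `(2π)`-periodicity in both coordinate directions: `f` is a function on the 2-torus. -/
def Per2 (f : ℝ × ℝ → ℝ) : Prop :=
  (∀ x, f (x + (2 * Real.pi, 0)) = f x) ∧ (∀ x, f (x + (0, 2 * Real.pi)) = f x)

/-- Fourier coefficient of a `2π`-periodic function on the 2-torus. -/
def fCoeff (f : ℝ × ℝ → ℝ) (k : ℤ × ℤ) : ℂ :=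
  (1 / (2 * Real.pi) ^ 2 : ℂ) *
    ∫ x in Q2, (f x : ℂ) * Complex.exp (-Complex.I * (((k.1 : ℝ) * x.1 + (k.2 : ℝ) * x.2 : ℝ) : ℂ))

/-- `ψ = (-Δ)^{-1/2} θ`, characterized spectrally via Fourier coefficients. -/
def IsInvSqrtLap (θ ψ : ℝ × ℝ → ℝ) : Prop :=
  ∀ k : ℤ × ℤ, fCoeff ψ k =
    if k = 0 then 0
    else (Complex.ofReal (Real.sqrt ((k.1 : ℝ) ^ 2 + (k.2 : ℝ) ^ 2)))⁻¹ * fCoeff θ k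

/-- `g = (-Δ)^{-1/4} θ`, characterized spectrally via Fourier coefficients. -/
def IsInvQuartLap (θ g : ℝ × ℝ → ℝ) : Prop :=
  ∀ k : ℤ × ℤ, fCoeff g k =
    if k = 0 then 0
    else (Complex.ofReal (((k.1 : ℝ) ^ 2 + (k.2 : ℝ) ^ 2) ^ ((1 : ℝ) / 4)))⁻¹ * fCoeff θ k

/-- Sobolev `H^s` norm on the torus, via Fourier coefficients. -/
def hSob (s : ℝ) (f : ℝ × ℝ → ℝ) : ℝ :=
  Real.sqrt (∑' k : ℤ × ℤ, (1 + ((k.1 : ℝ) ^ 2 + (k.2 : ℝ) ^ 2)) ^ s * ‖fCoeff f k‖ ^ 2)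

/-- The SQG nonlinearity `u·∇θ` where `u = R^⊥θ = ∇^⊥ψ`, `ψ = (-Δ)^{-1/2}θ`. -/
def Bnl (θ ψ : ℝ × ℝ → ℝ) (x : ℝ × ℝ) : ℝ :=
  (-(pder ψ (0, 1) x)) * pder θ (1, 0) x + pder ψ (1, 0) x * pder θ (0, 1) x

/-- The Laplacian of a function on the torus. -/
def lap (θ : ℝ × ℝ → ℝ) : ℝ × ℝ → ℝ :=
  fun x => pder (pder θ (1, 0)) (1, 0) x + pder (pder θ (0, 1)) (0, 1) x

lemma contDiff_pder {g : ℝ × ℝ → ℝ} (hg : ContDiff ℝ (⊤ : ℕ∞) g) (v : ℝ × ℝ) :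
    ContDiff ℝ (⊤ : ℕ∞) (pder g v) :=
  (ContinuousLinearMap.apply ℝ ℝ v).contDiff.comp (hg.fderiv_right (by simp))

variable {g h : ℝ × ℝ → ℝ} {v x : ℝ × ℝ}

lemma pder_add (hg : DifferentiableAt ℝ g x) (hh : DifferentiableAt ℝ h x) :
    pder (fun y => g y + h y) v x = pder g v x + pder h v x := by
  simp [pder, fderiv_fun_add hg hh]

lemma pder_sub (hg : DifferentiableAt ℝ g x) (hh : DifferentiableAt ℝ h x) :
    pder (fun y => g y - h y) v x = pder g v x - pder h v x := by
  simp [pder, fderiv_fun_sub hg hh]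

lemma pder_mul (hg : DifferentiableAt ℝ g x) (hh : DifferentiableAt ℝ h x) :
    pder (fun y => g y * h y) v x = pder g v x * h x + g x * pder h v x := by
  simp [pder, fderiv_fun_mul hg hh]; ring

lemma pder_const_mul (c : ℝ) (hg : DifferentiableAt ℝ g x) :
    pder (fun y => c * g y) v x = c * pder g v x := by
  simp [pder, fderiv_const_mul hg]

lemma pder_comp (f : ℝ → ℝ) (hf : DifferentiableAt ℝ f (g x)) (hg : DifferentiableAt ℝ g x) :
    pder (fun y => f (g y)) v x = deriv f (g x) * pder g v x := by
  have h1 : fderiv ℝ (f ∘ g) x = (fderiv ℝ f (g x)).comp (fderiv ℝ g x) := fderiv_comp x hf hg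
  have h2 : pder (fun y => f (g y)) v x = fderiv ℝ f (g x) (fderiv ℝ g x v) := by
    simp only [pder]
    rw [show (fun y => f (g y)) = f ∘ g from rfl, h1, ContinuousLinearMap.comp_apply]
  rw [h2, show (fderiv ℝ g x v : ℝ) = (fderiv ℝ g x v : ℝ) • (1:ℝ) by simp,
    (fderiv ℝ f (g x)).map_smul, fderiv_apply_one_eq_deriv, smul_eq_mul]
  simp [pder, mul_comm]

lemma pder_comm (hg : ContDiff ℝ (⊤ : ℕ∞) g) (v w x) :
    pder (pder g v) w x = pder (pder g w) v x := by
  have hd : ∀ y, HasFDerivAt g (fderiv ℝ g y) y :=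
    fun y => (hg.differentiable (by simp) y).hasFDerivAt
  have hd2 : HasFDerivAt (fderiv ℝ g) (fderiv ℝ (fderiv ℝ g) x) x :=
    ((hg.fderiv_right (m := (⊤ : ℕ∞)) ((by simp))).differentiable (by simp) x).hasFDerivAt
  have hsym := second_derivative_symmetric hd hd2 v w
  have e : ∀ (u w' : ℝ × ℝ), pder (pder g u) w' x = (fderiv ℝ (fderiv ℝ g) x w') u := by
    intro u w'
    have h4 := (hd2.clm_apply (hasFDerivAt_const u x)).fderiv
    simp only [pder]
    rw [show pder g u = (fun y => (fderiv ℝ g y) u) from rfl, h4]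
    simp
  rw [e v w, e w v]
  exact hsym.symm

lemma pder_shift (hg : Differentiable ℝ g) (c : ℝ × ℝ) (hp : ∀ y, g (y + c) = g y) (v x) :
    pder g v (x + c) = pder g v x := by
  have h1 : (fun y => g (y + c)) = g := funext hp
  have h2 : HasFDerivAt (fun y => g (y + c)) (fderiv ℝ g (x + c)) x := by
    have := (hg (x + c)).hasFDerivAt.comp x ((hasFDerivAt_id x).add_const c)
    simpa [Function.comp_def] using this
  rw [h1] at h2
  simp only [pder, h2.fderiv]

lemma per2_pder (hg : Differentiable ℝ g) (hp : Per2 g) (v : ℝ × ℝ) : Per2 (pder g v) :=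
  ⟨fun x => pder_shift hg _ hp.1 v x, fun x => pder_shift hg _ hp.2 v x⟩

/-- The divergence integral of a smooth periodic vector field over `Q2` vanishes. -/
lemma div_integral_zero (V W : ℝ × ℝ → ℝ) (hV : ContDiff ℝ (⊤ : ℕ∞) V) (hW : ContDiff ℝ (⊤ : ℕ∞) W)
    (pV : Per2 V) (pW : Per2 W) :
    ∫ x in Q2, (pder V (1, 0) x + pder W (0, 1) x) = 0 := by
  have hle : ((0, 0) : ℝ × ℝ) ≤ (2 * Real.pi, 2 * Real.pi) := by
    constructor <;> positivity
  have key := integral_divergence_prod_Icc_of_hasFDerivAt_off_countable_of_le V W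
    (fun x => fderiv ℝ V x) (fun x => fderiv ℝ W x) (0, 0) (2 * Real.pi, 2 * Real.pi) hle
    ∅ Set.countable_empty
    ((hV.continuous).continuousOn) ((hW.continuous).continuousOn)
    (fun x _ => (hV.differentiable (by simp) x).hasFDerivAt)
    (fun x _ => (hW.differentiable (by simp) x).hasFDerivAt)
    (((contDiff_pder hV (1,0)).continuous.add (contDiff_pder hW (0,1)).continuous).continuousOn.integrableOn_compact isCompact_Icc)
  have e1 : ∀ s : ℝ, W (s, 2 * Real.pi) = W (s, 0) := by
    intro s; have := pW.2 (s, 0); simpa using this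
  have e2 : ∀ s : ℝ, V (2 * Real.pi, s) = V (0, s) := by
    intro s; have := pV.1 (0, s); simpa using this
  simp only [e1, e2] at key
  rw [Q2]
  rw [show (fun x => pder V (1,0) x + pder W (0,1) x) = (fun x => (fderiv ℝ V x) (1,0) + (fderiv ℝ W x) (0,1)) from rfl]
  rw [key]; ring

lemma pder_const' {v x : ℝ × ℝ} (c : ℝ) : pder (fun _ => c) v x = 0 := by
  simp [pder]

lemma contDiff_deriv {f : ℝ → ℝ} (hf : ContDiff ℝ (⊤ : ℕ∞) f) : ContDiff ℝ (⊤ : ℕ∞) (deriv f) := by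
  have h : ContDiff ℝ (⊤ : ℕ∞) (fun x => fderiv ℝ f x 1) :=
    (ContinuousLinearMap.apply ℝ ℝ (1:ℝ)).contDiff.comp (hf.fderiv_right (by simp))
  have e : deriv f = fun x => fderiv ℝ f x 1 := funext fun x => fderiv_apply_one_eq_deriv.symm
  rw [e]; exact h

/-- First component of the flux vector field. -/
def VF (f : ℝ → ℝ) (θ : ℝ × ℝ → ℝ) (v : ℝ × ℝ) : ℝ × ℝ → ℝ := fun y =>
  3 * deriv f (θ y) *
      (pder (pder (pder θ (1,0)) (1,0)) v y + pder (pder (pder θ (0,1)) (0,1)) v y)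
    - 2 * deriv (deriv f) (θ y) *
      (pder (pder θ (1,0)) v y * pder θ (1,0) y + pder (pder θ (0,1)) v y * pder θ (0,1) y)
    - deriv (deriv f) (θ y) *
      ((pder (pder θ (1,0)) (1,0) y + pder (pder θ (0,1)) (0,1) y) * pder θ v y)
    + deriv (deriv (deriv f)) (θ y) *
      ((pder θ (1,0) y * pder θ (1,0) y + pder θ (0,1) y * pder θ (0,1) y) * pder θ v y)

lemma ptwise (f : ℝ → ℝ) (θ : ℝ × ℝ → ℝ) (hf : ContDiff ℝ (⊤ : ℕ∞) f) (hθ : ContDiff ℝ (⊤ : ℕ∞) θ)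
    (x : ℝ × ℝ) :
    pder (VF f θ (1,0)) (1,0) x + pder (VF f θ (0,1)) (0,1) x =
      3 * (deriv f (θ x) * lap (lap θ) x)
      - deriv (deriv f) (θ x) *
          ((lap θ x) ^ 2 +
            2 * ((pder (pder θ (1, 0)) (1, 0) x) ^ 2 + (pder (pder θ (1, 0)) (0, 1) x) ^ 2 +
                 (pder (pder θ (0, 1)) (1, 0) x) ^ 2 + (pder (pder θ (0, 1)) (0, 1) x) ^ 2))
      + iteratedDeriv 4 f (θ x) *
          ((pder θ (1, 0) x) ^ 2 + (pder θ (0, 1) x) ^ 2) ^ 2 := by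
  -- differentiability facts for fun_prop
  have hdθ : Differentiable ℝ θ := hθ.differentiable (by simp)
  have h1 : Differentiable ℝ (pder θ (1,0)) := (contDiff_pder hθ _).differentiable (by simp)
  have h2 : Differentiable ℝ (pder θ (0,1)) := (contDiff_pder hθ _).differentiable (by simp)
  have h11 : Differentiable ℝ (pder (pder θ (1,0)) (1,0)) :=
    (contDiff_pder (contDiff_pder hθ _) _).differentiable (by simp)
  have h12 : Differentiable ℝ (pder (pder θ (1,0)) (0,1)) :=
    (contDiff_pder (contDiff_pder hθ _) _).differentiable (by simp)
  have h21 : Differentiable ℝ (pder (pder θ (0,1)) (1,0)) :=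
    (contDiff_pder (contDiff_pder hθ _) _).differentiable (by simp)
  have h22 : Differentiable ℝ (pder (pder θ (0,1)) (0,1)) :=
    (contDiff_pder (contDiff_pder hθ _) _).differentiable (by simp)
  have h111 : Differentiable ℝ (pder (pder (pder θ (1,0)) (1,0)) (1,0)) :=
    (contDiff_pder (contDiff_pder (contDiff_pder hθ _) _) _).differentiable (by simp)
  have h112 : Differentiable ℝ (pder (pder (pder θ (1,0)) (1,0)) (0,1)) :=
    (contDiff_pder (contDiff_pder (contDiff_pder hθ _) _) _).differentiable (by simp)
  have h221 : Differentiable ℝ (pder (pder (pder θ (0,1)) (0,1)) (1,0)) :=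
    (contDiff_pder (contDiff_pder (contDiff_pder hθ _) _) _).differentiable (by simp)
  have h222 : Differentiable ℝ (pder (pder (pder θ (0,1)) (0,1)) (0,1)) :=
    (contDiff_pder (contDiff_pder (contDiff_pder hθ _) _) _).differentiable (by simp)
  have hf1 : Differentiable ℝ (deriv f) := (contDiff_deriv hf).differentiable (by simp)
  have hf2 : Differentiable ℝ (deriv (deriv f)) :=
    (contDiff_deriv (contDiff_deriv hf)).differentiable (by simp)
  have hf3 : Differentiable ℝ (deriv (deriv (deriv f))) :=
    (contDiff_deriv (contDiff_deriv (contDiff_deriv hf))).differentiable (by simp)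
  -- chain rules
  have c1 : ∀ (v x), pder (fun y => deriv f (θ y)) v x
      = deriv (deriv f) (θ x) * pder θ v x :=
    fun v x => pder_comp (deriv f) (hf1 _) (hdθ _)
  have c2 : ∀ (v x), pder (fun y => deriv (deriv f) (θ y)) v x
      = deriv (deriv (deriv f)) (θ x) * pder θ v x :=
    fun v x => pder_comp (deriv (deriv f)) (hf2 _) (hdθ _)
  have c3 : ∀ (v x), pder (fun y => deriv (deriv (deriv f)) (θ y)) v x
      = deriv (deriv (deriv (deriv f))) (θ x) * pder θ v x :=
    fun v x => pder_comp (deriv (deriv (deriv f))) (hf3 _) (hdθ _)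
  -- symmetry of mixed partials
  have r1 : pder (pder θ (0,1)) (1,0) = pder (pder θ (1,0)) (0,1) :=
    funext fun z => pder_comm hθ _ _ z
  have r2 : pder (pder (pder θ (1,0)) (0,1)) (1,0)
      = pder (pder (pder θ (1,0)) (1,0)) (0,1) :=
    funext fun z => pder_comm (contDiff_pder hθ _) _ _ z
  have r3 : pder (pder (pder θ (0,1)) (0,1)) (1,0)
      = pder (pder (pder θ (1,0)) (0,1)) (0,1) := by
    have := funext fun z => pder_comm (contDiff_pder hθ (0,1)) (0,1) (1,0) z
    rw [this, r1]
  have h4 : iteratedDeriv 4 f = deriv (deriv (deriv (deriv f))) := by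
    simp [iteratedDeriv_succ, iteratedDeriv_zero]
  -- expand RHS laplacians into atoms
  have hGfun1 : pder (lap θ) (1,0) = fun y =>
      pder (pder (pder θ (1,0)) (1,0)) (1,0) y + pder (pder (pder θ (0,1)) (0,1)) (1,0) y :=
    funext fun z => pder_add (h11 _) (h22 _)
  have hGfun2 : pder (lap θ) (0,1) = fun y =>
      pder (pder (pder θ (1,0)) (1,0)) (0,1) y + pder (pder (pder θ (0,1)) (0,1)) (0,1) y :=
    funext fun z => pder_add (h11 _) (h22 _)
  have hLL : lap (lap θ) x =
      pder (fun y => pder (pder (pder θ (1,0)) (1,0)) (1,0) y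
          + pder (pder (pder θ (0,1)) (0,1)) (1,0) y) (1,0) x
      + pder (fun y => pder (pder (pder θ (1,0)) (1,0)) (0,1) y
          + pder (pder (pder θ (0,1)) (0,1)) (0,1) y) (0,1) x := by
    show pder (pder (lap θ) (1,0)) (1,0) x + pder (pder (lap θ) (0,1)) (0,1) x = _
    rw [hGfun1, hGfun2]
  have hL : ∀ z, lap θ z = pder (pder θ (1,0)) (1,0) z + pder (pder θ (0,1)) (0,1) z :=
    fun _ => rfl
  have hVF : ∀ v, VF f θ v = fun y =>
      3 * deriv f (θ y) *
          (pder (pder (pder θ (1,0)) (1,0)) v y + pder (pder (pder θ (0,1)) (0,1)) v y)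
        - 2 * deriv (deriv f) (θ y) *
          (pder (pder θ (1,0)) v y * pder θ (1,0) y + pder (pder θ (0,1)) v y * pder θ (0,1) y)
        - deriv (deriv f) (θ y) *
          ((pder (pder θ (1,0)) (1,0) y + pder (pder θ (0,1)) (0,1) y) * pder θ v y)
        + deriv (deriv (deriv f)) (θ y) *
          ((pder θ (1,0) y * pder θ (1,0) y + pder θ (0,1) y * pder θ (0,1) y) * pder θ v y) :=
    fun v => rfl
  rw [hLL, h4, hVF, hVF]
  simp only [hL]
  simp (disch := fun_prop) only [pder_add, pder_sub, pder_mul, pder_const_mul, pder_const', c1, c2, c3]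
  simp only [r1, r2, r3]
  ring

/-- for smooth `f : ℝ → ℝ` and smooth `θ` on `T²`,
`∫ f'(θ) Δ²θ = (1/3)[∫ f''(θ)((Δθ)² + 2|D²θ|²) − ∫ f⁗(θ)|∇θ|⁴]`. -/
theorem stmt3 (f : ℝ → ℝ) (θ : ℝ × ℝ → ℝ)
    (hf : ContDiff ℝ (⊤ : ℕ∞) f) (hθs : ContDiff ℝ (⊤ : ℕ∞) θ) (hθp : Per2 θ) :
    ∫ x in Q2, deriv f (θ x) * lap (lap θ) x =
      (1 / 3) *
        ((∫ x in Q2, deriv (deriv f) (θ x) *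
            ((lap θ x) ^ 2 +
              2 * ((pder (pder θ (1, 0)) (1, 0) x) ^ 2 + (pder (pder θ (1, 0)) (0, 1) x) ^ 2 +
                   (pder (pder θ (0, 1)) (1, 0) x) ^ 2 + (pder (pder θ (0, 1)) (0, 1) x) ^ 2)))
          - ∫ x in Q2, iteratedDeriv 4 f (θ x) *
              ((pder θ (1, 0) x) ^ 2 + (pder θ (0, 1) x) ^ 2) ^ 2) := by
  -- bookkeeping: smoothness and periodicity of atoms
  have K : ∀ (g : ℝ × ℝ → ℝ), ContDiff ℝ (⊤ : ℕ∞) g → Per2 g → ∀ v,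
      ContDiff ℝ (⊤ : ℕ∞) (pder g v) ∧ Per2 (pder g v) := fun g hg hp v =>
    ⟨contDiff_pder hg v, per2_pder (hg.differentiable (by simp)) hp v⟩
  have A1 := K θ hθs hθp (1, 0)
  have A2 := K θ hθs hθp (0, 1)
  have A1v := fun v => K _ A1.1 A1.2 v
  have A2v := fun v => K _ A2.1 A2.2 v
  have A11v := fun v => K _ (A1v (1, 0)).1 (A1v (1, 0)).2 v
  have A22v := fun v => K _ (A2v (0, 1)).1 (A2v (0, 1)).2 v
  have hcf1 : ContDiff ℝ (⊤ : ℕ∞) (deriv f) := contDiff_deriv hf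
  have hcf2 : ContDiff ℝ (⊤ : ℕ∞) (deriv (deriv f)) := contDiff_deriv hcf1
  have hcf3 : ContDiff ℝ (⊤ : ℕ∞) (deriv (deriv (deriv f))) := contDiff_deriv hcf2
  have hVF : ∀ v, VF f θ v = fun y =>
      3 * deriv f (θ y) *
          (pder (pder (pder θ (1,0)) (1,0)) v y + pder (pder (pder θ (0,1)) (0,1)) v y)
        - 2 * deriv (deriv f) (θ y) *
          (pder (pder θ (1,0)) v y * pder θ (1,0) y + pder (pder θ (0,1)) v y * pder θ (0,1) y)
        - deriv (deriv f) (θ y) *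
          ((pder (pder θ (1,0)) (1,0) y + pder (pder θ (0,1)) (0,1) y) * pder θ v y)
        + deriv (deriv (deriv f)) (θ y) *
          ((pder θ (1,0) y * pder θ (1,0) y + pder θ (0,1) y * pder θ (0,1) y) * pder θ v y) :=
    fun v => rfl
  -- smoothness of the flux components
  have hVFs : ∀ v, ContDiff ℝ (⊤ : ℕ∞) (VF f θ v) := by
    intro v
    have cv : ContDiff ℝ (⊤ : ℕ∞) (pder θ v) := contDiff_pder hθs v
    rw [hVF]
    exact ((((contDiff_const.mul (hcf1.comp hθs)).mul ((A11v v).1.add (A22v v).1)).sub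
      ((contDiff_const.mul (hcf2.comp hθs)).mul
        (((A1v v).1.mul A1.1).add ((A2v v).1.mul A2.1)))).sub
      ((hcf2.comp hθs).mul (((A1v (1,0)).1.add (A2v (0,1)).1).mul cv))).add
      ((hcf3.comp hθs).mul (((A1.1.mul A1.1).add (A2.1.mul A2.1)).mul cv))
  -- periodicity of the flux components
  have hVFp : ∀ v, Per2 (VF f θ v) := by
    intro v
    have Av := K θ hθs hθp v
    constructor <;> intro x <;>
      simp only [hVF, hθp.1, hθp.2, A1.2.1, A1.2.2, A2.2.1, A2.2.2, Av.2.1, Av.2.2,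
        (A1v (1,0)).2.1, (A1v (1,0)).2.2, (A1v v).2.1, (A1v v).2.2,
        (A2v (0,1)).2.1, (A2v (0,1)).2.2, (A2v v).2.1, (A2v v).2.2,
        (A11v v).2.1, (A11v v).2.2, (A22v v).2.1, (A22v v).2.2]
  -- the divergence integral vanishes
  have hzero : ∫ x in Q2,
      (pder (VF f θ (1,0)) (1,0) x + pder (VF f θ (0,1)) (0,1) x) = 0 :=
    div_integral_zero _ _ (hVFs _) (hVFs _) (hVFp _) (hVFp _)
  -- rewrite the integrand via the pointwise identity
  have hpt := ptwise f θ hf hθs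
  rw [integral_congr_ae (Filter.Eventually.of_forall fun x => hpt x)] at hzero
  -- integrability of the three pieces
  have hlap1 : ContDiff ℝ (⊤ : ℕ∞) (lap θ) := ((A1v (1,0)).1).add ((A2v (0,1)).1)
  have hlap2 : ContDiff ℝ (⊤ : ℕ∞) (lap (lap θ)) :=
    (contDiff_pder (contDiff_pder hlap1 (1,0)) (1,0)).add
      (contDiff_pder (contDiff_pder hlap1 (0,1)) (0,1))
  have hit4 : Continuous (fun x : ℝ × ℝ => iteratedDeriv 4 f (θ x)) := by
    have h4 : iteratedDeriv 4 f = deriv (deriv (deriv (deriv f))) := by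
      simp [iteratedDeriv_succ, iteratedDeriv_zero]
    rw [h4]
    exact ((contDiff_deriv hcf3).continuous).comp hθs.continuous
  have ia : IntegrableOn (fun x => deriv f (θ x) * lap (lap θ) x) Q2 :=
    ((hcf1.continuous.comp hθs.continuous).mul
      hlap2.continuous).continuousOn.integrableOn_compact isCompact_Icc
  have ib : IntegrableOn (fun x => deriv (deriv f) (θ x) *
      ((lap θ x) ^ 2 +
        2 * ((pder (pder θ (1, 0)) (1, 0) x) ^ 2 + (pder (pder θ (1, 0)) (0, 1) x) ^ 2 +
             (pder (pder θ (0, 1)) (1, 0) x) ^ 2 + (pder (pder θ (0, 1)) (0, 1) x) ^ 2))) Q2 := by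
    apply ContinuousOn.integrableOn_compact isCompact_Icc
    apply Continuous.continuousOn
    exact (hcf2.continuous.comp hθs.continuous).mul
      (((hlap1.continuous).pow 2).add (continuous_const.mul
        (((((A1v (1,0)).1.continuous.pow 2).add ((A1v (0,1)).1.continuous.pow 2)).add
          ((A2v (1,0)).1.continuous.pow 2)).add ((A2v (0,1)).1.continuous.pow 2))))
  have ic : IntegrableOn (fun x => iteratedDeriv 4 f (θ x) *
      ((pder θ (1, 0) x) ^ 2 + (pder θ (0, 1) x) ^ 2) ^ 2) Q2 := by
    apply ContinuousOn.integrableOn_compact isCompact_Icc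
    apply Continuous.continuousOn
    exact hit4.mul (((A1.1.continuous.pow 2).add (A2.1.continuous.pow 2)).pow 2)
  -- split the integral and conclude
  set a : (ℝ × ℝ) → ℝ := fun x => deriv f (θ x) * lap (lap θ) x with ha
  set b : (ℝ × ℝ) → ℝ := fun x => deriv (deriv f) (θ x) *
      ((lap θ x) ^ 2 +
        2 * ((pder (pder θ (1, 0)) (1, 0) x) ^ 2 + (pder (pder θ (1, 0)) (0, 1) x) ^ 2 +
             (pder (pder θ (0, 1)) (1, 0) x) ^ 2 + (pder (pder θ (0, 1)) (0, 1) x) ^ 2)) with hb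
  set c : (ℝ × ℝ) → ℝ := fun x => iteratedDeriv 4 f (θ x) *
      ((pder θ (1, 0) x) ^ 2 + (pder θ (0, 1) x) ^ 2) ^ 2 with hc
  have h5 : ∫ x in Q2, (3 * a x - b x + c x) = (∫ x in Q2, (3 * a x - b x)) + ∫ x in Q2, c x :=
    integral_add ((ia.const_mul 3).sub ib) ic
  have h6 : ∫ x in Q2, (3 * a x - b x) = (∫ x in Q2, 3 * a x) - ∫ x in Q2, b x :=
    integral_sub (ia.const_mul 3) ib
  have h7 : ∫ x in Q2, 3 * a x = 3 * ∫ x in Q2, a x := integral_const_mul 3 a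
  have hzero' : ∫ x in Q2, (3 * a x - b x + c x) = 0 := hzero
  rw [h5, h6, h7] at hzero'
  linarith [hzero']
end
end

section
/- Let T₀ > 0 and let y : [0, T₀] → [0,∞) be absolutely continuous with y(0) = 0 and satisfy, for every δ ∈ (0,1), the differential inequality y'(t) ≤ C (1−δ)^{−1/2} y(t)^{δ} g(t), where g ≥ 0 is integrable on [0,T₀] and C is independent of δ. Then y ≡ 0 on [0, T₀]. -/
open MeasureTheory Set

/-- Osgood/Yudovich-type uniqueness lemma. If `y : [0,T₀] → [0,∞)` is
absolutely continuous (encoded by `y t = ∫₀ᵗ y'` with `y'` integrable), `y 0 = 0`, and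
for every `δ ∈ (0,1)` one has `y' ≤ C (1−δ)^{−1/2} y^δ g` with `g ≥ 0` integrable and
`C` independent of `δ`, then `y ≡ 0` on `[0,T₀]`. -/
theorem stmt6 (T₀ C : ℝ) (hT : 0 < T₀) (y y' g : ℝ → ℝ)
    (hy0 : y 0 = 0)
    (hynn : ∀ t ∈ Icc (0 : ℝ) T₀, 0 ≤ y t)
    (hgnn : ∀ t ∈ Icc (0 : ℝ) T₀, 0 ≤ g t)
    (hgint : IntegrableOn g (Icc (0 : ℝ) T₀))
    (hy'int : IntegrableOn y' (Icc (0 : ℝ) T₀))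
    (hderiv : ∀ t ∈ Ioo (0 : ℝ) T₀, HasDerivAt y (y' t) t)
    (hFTC : ∀ t ∈ Icc (0 : ℝ) T₀, y t = ∫ s in (0 : ℝ)..t, y' s)
    (hineq : ∀ δ ∈ Ioo (0 : ℝ) 1, ∀ t ∈ Icc (0 : ℝ) T₀,
      y' t ≤ C * (1 - δ) ^ (-(1 / 2 : ℝ)) * (y t) ^ δ * g t) :
    ∀ t ∈ Icc (0 : ℝ) T₀, y t = 0 := by
  -- Replace `C` by `C₀ = max C 1 ≥ 1`.
  set C₀ : ℝ := max C 1 with hC₀def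
  have hC₀1 : (1:ℝ) ≤ C₀ := le_max_right _ _
  have hC₀0 : (0:ℝ) < C₀ := lt_of_lt_of_le one_pos hC₀1
  have hineq' : ∀ δ ∈ Ioo (0 : ℝ) 1, ∀ t ∈ Icc (0 : ℝ) T₀,
      y' t ≤ C₀ * (1 - δ) ^ (-(1 / 2 : ℝ)) * (y t) ^ δ * g t := by
    intro δ hδ t ht
    refine (hineq δ hδ t ht).trans ?_
    have h1 : (0:ℝ) ≤ (1 - δ) ^ (-(1 / 2 : ℝ)) := Real.rpow_nonneg (by linarith [hδ.2]) _
    have h2 : (0:ℝ) ≤ (y t) ^ δ := Real.rpow_nonneg (hynn t ht) _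
    have h3 := hgnn t ht
    have hCle : C ≤ C₀ := le_max_left _ _
    have hnn : 0 ≤ (1 - δ) ^ (-(1 / 2 : ℝ)) * (y t) ^ δ * g t :=
      mul_nonneg (mul_nonneg h1 h2) h3
    calc C * (1 - δ) ^ (-(1 / 2 : ℝ)) * (y t) ^ δ * g t
        = C * ((1 - δ) ^ (-(1 / 2 : ℝ)) * (y t) ^ δ * g t) := by ring
      _ ≤ C₀ * ((1 - δ) ^ (-(1 / 2 : ℝ)) * (y t) ^ δ * g t) := mul_le_mul_of_nonneg_right hCle hnn
      _ = C₀ * (1 - δ) ^ (-(1 / 2 : ℝ)) * (y t) ^ δ * g t := by ring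
  -- continuity of y on [0,T₀]
  have hycont : ContinuousOn y (Icc (0:ℝ) T₀) := by
    have h1 : IntegrableOn y' (uIcc (0:ℝ) T₀) := by
      rwa [uIcc_of_le hT.le]
    have h2 := intervalIntegral.continuousOn_primitive_interval (a := (0:ℝ)) (b := T₀)
      (μ := volume) h1
    rw [uIcc_of_le hT.le] at h2
    exact h2.congr hFTC
  -- the total mass of g
  set G : ℝ := ∫ u in (0:ℝ)..T₀, g u with hGdef
  have hGnn : 0 ≤ G := intervalIntegral.integral_nonneg hT.le (fun u hu => hgnn u hu)
  -- Key estimate: for δ ∈ (0,1), ε > 0, t ∈ [0,T₀]: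
  -- (y t + ε)^(1-δ) ≤ ε^(1-δ) + C₀ (1-δ)^{1/2} G
  have key : ∀ δ ∈ Ioo (0:ℝ) 1, ∀ ε : ℝ, 0 < ε → ∀ t ∈ Icc (0:ℝ) T₀,
      (y t + ε) ^ (1 - δ) ≤ ε ^ (1 - δ) + C₀ * (1 - δ) ^ (1/2 : ℝ) * G := by
    intro δ hδ ε hε t ht
    have h1δ : (0:ℝ) < 1 - δ := by linarith [hδ.2]
    set φ : ℝ → ℝ := fun s => (y s + ε) ^ (1 - δ) with hφdef
    set φ' : ℝ → ℝ := fun s => y' s * (1 - δ) * (y s + ε) ^ (1 - δ - 1) with hφ'def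
    have hsub : Icc (0:ℝ) t ⊆ Icc (0:ℝ) T₀ := Icc_subset_Icc le_rfl ht.2
    have hφcont : ContinuousOn φ (Icc (0:ℝ) t) := by
      apply ContinuousOn.rpow_const
      · exact ((hycont.mono hsub).add continuousOn_const)
      · intro x hx
        exact Or.inr h1δ.le
    have hφderiv : ∀ s ∈ Ioo (0:ℝ) t, HasDerivWithinAt φ (φ' s) (Ioi s) s := by
      intro s hs
      have hsIoo : s ∈ Ioo (0:ℝ) T₀ := ⟨hs.1, lt_of_lt_of_le hs.2 ht.2⟩
      have hys : 0 ≤ y s := hynn s ⟨hsIoo.1.le, hsIoo.2.le⟩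
      have hne : y s + ε ≠ 0 := by positivity
      have h := ((hderiv s hsIoo).add_const ε).rpow_const (p := 1 - δ) (Or.inl hne)
      exact h.hasDerivWithinAt
    -- bound on φ'
    have hφbound : ∀ s ∈ Ioo (0:ℝ) t, φ' s ≤ C₀ * (1 - δ) ^ (1/2 : ℝ) * g s := by
      intro s hs
      have hsIcc : s ∈ Icc (0:ℝ) T₀ := ⟨hs.1.le, hs.2.le.trans ht.2⟩
      have hys : 0 ≤ y s := hynn s hsIcc
      have hgs : 0 ≤ g s := hgnn s hsIcc
      have hyε : (0:ℝ) < y s + ε := by positivity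
      have hK : (0:ℝ) ≤ (1 - δ) * (y s + ε) ^ (1 - δ - 1) :=
        mul_nonneg h1δ.le (Real.rpow_nonneg hyε.le _)
      have h1 : φ' s ≤ (1 - δ) * (y s + ε) ^ (1 - δ - 1) *
          (C₀ * (1 - δ) ^ (-(1 / 2 : ℝ)) * (y s) ^ δ * g s) := by
        have := hineq' δ hδ s hsIcc
        calc φ' s = (1 - δ) * (y s + ε) ^ (1 - δ - 1) * y' s := by
              simp only [hφ'def]; ring
          _ ≤ _ := mul_le_mul_of_nonneg_left this hK
      refine h1.trans ?_
      -- now pure algebra with rpow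
      have e1 : (1 - δ) * (1 - δ) ^ (-(1 / 2 : ℝ)) = (1 - δ) ^ (1/2 : ℝ) := by
        nth_rewrite 1 [← Real.rpow_one (1 - δ)]
        rw [← Real.rpow_add h1δ]
        norm_num
      have e2 : (y s) ^ δ * (y s + ε) ^ (1 - δ - 1) ≤ (y s + ε) ^ (1 - δ - 1 + δ) := by
        have h3 : (y s) ^ δ ≤ (y s + ε) ^ δ :=
          Real.rpow_le_rpow hys (by linarith) hδ.1.le
        calc (y s) ^ δ * (y s + ε) ^ (1 - δ - 1) ≤ (y s + ε) ^ δ * (y s + ε) ^ (1 - δ - 1) :=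
              mul_le_mul_of_nonneg_right h3 (Real.rpow_nonneg hyε.le _)
          _ = (y s + ε) ^ (1 - δ - 1 + δ) := by
              rw [← Real.rpow_add hyε]; ring_nf
      have e3 : (1 - δ - 1 + δ : ℝ) = 0 := by ring
      rw [e3, Real.rpow_zero] at e2
      calc (1 - δ) * (y s + ε) ^ (1 - δ - 1) * (C₀ * (1 - δ) ^ (-(1 / 2 : ℝ)) * (y s) ^ δ * g s)
          = C₀ * ((1 - δ) * (1 - δ) ^ (-(1 / 2 : ℝ))) *
              ((y s) ^ δ * (y s + ε) ^ (1 - δ - 1)) * g s := by ring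
        _ = C₀ * (1 - δ) ^ (1/2 : ℝ) * ((y s) ^ δ * (y s + ε) ^ (1 - δ - 1)) * g s := by rw [e1]
        _ ≤ C₀ * (1 - δ) ^ (1/2 : ℝ) * 1 * g s := by
            apply mul_le_mul_of_nonneg_right _ hgs
            apply mul_le_mul_of_nonneg_left e2
            exact mul_nonneg hC₀0.le (Real.rpow_nonneg h1δ.le _)
        _ = C₀ * (1 - δ) ^ (1/2 : ℝ) * g s := by ring
    -- integrability of the bound
    have hbint : IntegrableOn (fun s => C₀ * (1 - δ) ^ (1/2 : ℝ) * g s) (Icc (0:ℝ) t) :=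
      (hgint.mono_set hsub).const_mul _
    have hFTC2 := intervalIntegral.sub_le_integral_of_hasDeriv_right_of_le ht.1 hφcont hφderiv hbint hφbound
    have hφ0 : φ 0 = ε ^ (1 - δ) := by simp [hφdef, hy0]
    have hIle : (∫ u in (0:ℝ)..t, C₀ * (1 - δ) ^ (1/2 : ℝ) * g u)
        ≤ C₀ * (1 - δ) ^ (1/2 : ℝ) * G := by
      rw [intervalIntegral.integral_const_mul, hGdef]
      apply mul_le_mul_of_nonneg_left _ (mul_nonneg hC₀0.le (Real.rpow_nonneg h1δ.le _))
      apply intervalIntegral.integral_mono_interval le_rfl ht.1 ht.2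
      · filter_upwards [ae_restrict_mem measurableSet_Ioc] with u hu
        exact hgnn u ⟨hu.1.le, hu.2⟩
      · have : IntegrableOn g (uIcc (0:ℝ) T₀) := by rwa [uIcc_of_le hT.le]
        exact this.intervalIntegrable
    have : φ t - φ 0 ≤ C₀ * (1 - δ) ^ (1/2 : ℝ) * G := hFTC2.trans hIle
    rw [hφ0] at this
    simpa [hφdef] using by linarith
  -- pass to the limit ε → 0⁺: (y t)^(1-δ) ≤ C₀ (1-δ)^{1/2} G
  have key2 : ∀ δ ∈ Ioo (0:ℝ) 1, ∀ t ∈ Icc (0:ℝ) T₀,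
      (y t) ^ (1 - δ) ≤ C₀ * (1 - δ) ^ (1/2 : ℝ) * G := by
    intro δ hδ t ht
    have h1δ : (0:ℝ) < 1 - δ := by linarith [hδ.2]
    have hconts : Continuous (fun ε : ℝ => (y t + ε) ^ (1 - δ)) := by
      apply Continuous.rpow_const (continuous_const.add continuous_id)
      intro x; exact Or.inr h1δ.le
    have hL : Filter.Tendsto (fun ε : ℝ => (y t + ε) ^ (1 - δ)) (nhdsWithin 0 (Ioi 0))
        (nhds ((y t) ^ (1 - δ))) := by
      have := hconts.tendsto 0
      simp only [add_zero] at this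
      exact this.mono_left nhdsWithin_le_nhds
    have hR : Filter.Tendsto (fun ε : ℝ => ε ^ (1 - δ) + C₀ * (1 - δ) ^ (1/2 : ℝ) * G)
        (nhdsWithin 0 (Ioi 0)) (nhds (C₀ * (1 - δ) ^ (1/2 : ℝ) * G)) := by
      have hc : Continuous (fun ε : ℝ => ε ^ (1 - δ)) := by
        apply Continuous.rpow_const continuous_id
        intro x; exact Or.inr h1δ.le
      have := (hc.tendsto 0).mono_left (nhdsWithin_le_nhds (s := Ioi (0:ℝ)))
      rw [Real.zero_rpow (ne_of_gt h1δ)] at this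
      have := this.add (tendsto_const_nhds (x := C₀ * (1 - δ) ^ (1/2 : ℝ) * G))
      simpa using this
    refine le_of_tendsto_of_tendsto hL hR ?_
    filter_upwards [self_mem_nhdsWithin] with ε hε
    exact key δ hδ ε hε t ht
  -- conclude
  intro t ht
  have hyt : 0 ≤ y t := hynn t ht
  by_contra hne
  have hpos : 0 < y t := lt_of_le_of_ne hyt (Ne.symm hne)
  set K : ℝ := C₀ * G with hKdef
  have hKnn : 0 ≤ K := mul_nonneg hC₀0.le hGnn
  set η : ℝ := min (y t / 2) (1/2) with hηdef
  have hη0 : 0 < η := lt_min (by linarith) (by norm_num)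
  have hη1 : η ≤ 1 := (min_le_right _ _).trans (by norm_num)
  have hηlt : η < y t := lt_of_le_of_lt (min_le_left _ _) (by linarith)
  -- choose s
  set a : ℝ := η / (K + 1) with hadef
  have ha0 : 0 < a := div_pos hη0 (by linarith)
  set s : ℝ := min (a * a) (1/2) with hsdef
  have hs0 : 0 < s := lt_min (by positivity) (by norm_num)
  have hs1 : s ≤ 1/2 := min_le_right _ _
  set δ : ℝ := 1 - s with hδdef
  have hδmem : δ ∈ Ioo (0:ℝ) 1 := ⟨by simp [hδdef]; linarith, by simp [hδdef]; linarith⟩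
  have h1δ : (1:ℝ) - δ = s := by simp [hδdef]
  have hkey := key2 δ hδmem t ht
  rw [h1δ] at hkey
  -- √s ≤ a
  have hsqrt : s ^ (1/2 : ℝ) ≤ a := by
    have h2 : (a * a) ^ (1/2 : ℝ) = a := by
      rw [show a * a = a ^ ((2:ℕ):ℝ) by rw [Real.rpow_natCast]; ring,
        ← Real.rpow_mul ha0.le, show ((2:ℕ):ℝ) * (1/2) = 1 by norm_num, Real.rpow_one]
    calc s ^ (1/2 : ℝ) ≤ (a * a) ^ (1/2 : ℝ) :=
          Real.rpow_le_rpow hs0.le (min_le_left _ _) (by norm_num)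
      _ = a := h2
  -- C₀ G s^{1/2} ≤ η
  have hbound : C₀ * s ^ (1/2 : ℝ) * G ≤ η := by
    have h1 : C₀ * s ^ (1/2 : ℝ) * G = K * s ^ (1/2 : ℝ) := by rw [hKdef]; ring
    rw [h1]
    calc K * s ^ (1/2 : ℝ) ≤ K * a := mul_le_mul_of_nonneg_left hsqrt hKnn
      _ = K * η / (K + 1) := by rw [hadef]; ring
      _ ≤ η := by
          rw [div_le_iff₀ (by linarith : (0:ℝ) < K + 1)]
          nlinarith
  have hyδ : (y t) ^ s ≤ η := hkey.trans hbound
  -- raise to power 1/s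
  have hfin : y t ≤ η := by
    have h1 : ((y t) ^ s) ^ (1/s : ℝ) ≤ η ^ (1/s : ℝ) :=
      Real.rpow_le_rpow (Real.rpow_nonneg hyt _) hyδ (by positivity)
    have h2 : ((y t) ^ s) ^ (1/s : ℝ) = y t := by
      rw [← Real.rpow_mul hyt]
      rw [mul_one_div, div_self (ne_of_gt hs0), Real.rpow_one]
    have h3 : η ^ (1/s : ℝ) ≤ η ^ (1 : ℝ) := by
      apply Real.rpow_le_rpow_of_exponent_ge hη0 hη1
      rw [le_div_iff₀ hs0]; linarith
    rw [h2] at h1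
    rw [Real.rpow_one] at h3
    linarith
  linarith
end
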